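/- Let μ be the measure on a Euclidean space a given by dμ(x) = δ(x) dx with δ(x) = ∏_{α∈R⁺} |sinh((α,x)/2)|^{2k(α)}, where k(α) > 0 for all α in the finite set R⁺ of nonzero vectors. Then for every A > 0 and every α ∈ R⁺, the function x ↦ coth((α,x)/2) is μ-integrable on the set {x ∈ closure(a₊) : |x| ≤ A}, where a₊ = {x : (β,x) > 0 ∀β ∈ R⁺}. -/

import Mathlib

/-!
Near the hyperplane `(α, x) = 0` we have `|coth((α,x)/2)| · |sinh((α,x)/2)|^{2k(α)} =
cosh((α,x)/2) · |sinh((α,x)/2)|^{2k(α)-1}`, and `|sinh t|^q ≤ |t|^q` for `q < 0`, so the integrand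
is dominated by a continuous function times `|sinh((α,x)/2)|^q` with `q = 2k(α) - 1 > -1`. The
latter is locally integrable on `ℝ`, and after rotating `α` to a coordinate axis it depends on a
single coordinate, so it is locally integrable on the whole space.
-/

open scoped RealInnerProductSpace
open MeasureTheory

open Set Metric Real

/-- At `b = 0` the left-hand side vanishes because `a / 0 = 0`. -/
lemma abs_div_mul_abs_rpow_le (a b p : ℝ) : |a / b| * |b| ^ p ≤ |a| * |b| ^ (p - 1) := by
  rcases eq_or_ne b 0 with rfl | hb
  · simp only [div_zero, abs_zero, zero_mul]
    positivity
  · rw [abs_div, Real.rpow_sub_one (abs_ne_zero.2 hb)]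
    field_simp
    rfl

theorem locallyIntegrable_abs_sinh_rpow {q : ℝ} (hq : -1 < q) :
    LocallyIntegrable (fun t : ℝ => |sinh t| ^ q) := by
  rcases le_or_gt 0 q with hq0 | hq0
  · exact (continuous_sinh.abs.rpow_const fun _ => Or.inr hq0).locallyIntegrable
  · refine locallyIntegrable_of_norm_le_rpow (μ := volume) (C := 1) (α := -q) (by simp)
      (by simpa using neg_lt.1 hq) (ae_of_all _ fun t => ?_)
      (continuous_sinh.abs.measurable.pow_const q).aestronglyMeasurable
    rw [neg_neg, one_mul, norm_of_nonneg (by positivity), norm_eq_abs]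
    rcases eq_or_ne t 0 with rfl | ht
    · simp
    · refine rpow_le_rpow_of_nonpos (abs_pos.2 ht) ?_ hq0.le
      rw [abs_sinh]
      exact self_le_sinh_iff.2 (abs_nonneg t)

theorem EuclideanSpace.integrableOn_closedBall_comp_apply {ι F : Type*} [Fintype ι]
    [NormedAddCommGroup F] {g : ℝ → F} (i : ι) {A : ℝ} (hg : IntegrableOn g (Icc (-A) A)) :
    IntegrableOn (fun y : EuclideanSpace ℝ ι => g (y i)) (closedBall 0 A) := by
  have hcube : IntegrableOn (fun y : ι → ℝ => g (y i)) (univ.pi fun _ => Icc (-A) A) := by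
    rw [IntegrableOn, volume_pi, Measure.restrict_pi_pi]
    exact integrable_comp_eval hg
  refine (((PiLp.volume_preserving_ofLp ι).integrableOn_comp_preimage
    (MeasurableEquiv.toLp 2 (ι → ℝ)).symm.measurableEmbedding).2 hcube).mono_set fun y hy j _ => ?_
  exact abs_le.1 ((PiLp.norm_apply_le y j).trans (mem_closedBall_zero_iff.1 hy))

theorem MeasureTheory.LocallyIntegrable.comp_inner {E F : Type*} [NormedAddCommGroup E]
    [InnerProductSpace ℝ E] [FiniteDimensional ℝ E] [MeasurableSpace E] [BorelSpace E]
    [NormedAddCommGroup F] {f : ℝ → F} (hf : LocallyIntegrable f) (α : E) :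
    LocallyIntegrable (fun x : E => f ⟪α, x⟫) := by
  rcases eq_or_ne α 0 with rfl | hα
  · simpa using locallyIntegrable_const (f 0)
  have hα' : ‖α‖ ≠ 0 := norm_ne_zero_iff.2 hα
  set u := ‖α‖⁻¹ • α
  obtain ⟨w, b, hw, hb⟩ := Orthonormal.exists_orthonormalBasis_extension (𝕜 := ℝ) (v := {u})
    (by simp [u, norm_smul, hα'])
  let i : w := ⟨u, hw rfl⟩
  have hinner : ∀ x, ⟪α, x⟫ = ‖α‖ * b.repr x i := fun x => by
    rw [b.repr_apply_apply, hb, real_inner_smul_left, mul_inv_cancel_left₀ hα']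
  rw [locallyIntegrable_iff]
  intro K hK
  obtain ⟨R, hR, hKR⟩ := hK.isBounded.subset_closedBall_lt 0 0
  have hg : IntegrableOn (fun t => f (‖α‖ * t)) (Icc (-R) R) := by
    have := (hf.integrableOn_isCompact (isCompact_uIcc (a := ‖α‖ * -R) (b := ‖α‖ * R))
      ).intervalIntegrable.comp_mul_left (c := ‖α‖)
    rw [mul_div_cancel_left₀ _ hα', mul_div_cancel_left₀ _ hα'] at this
    exact (intervalIntegrable_iff_integrableOn_Icc_of_le (by linarith)).1 this
  have hball := (b.measurePreserving_repr.integrableOn_comp_preimage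
    b.repr.toHomeomorph.measurableEmbedding).2
    (EuclideanSpace.integrableOn_closedBall_comp_apply i hg)
  rw [LinearIsometryEquiv.preimage_closedBall, map_zero] at hball
  simp_rw [hinner]
  exact hball.mono_set hKR

theorem locallyIntegrable_coth_mul_abs_sinh_rpow_mul {E : Type*} [NormedAddCommGroup E]
    [InnerProductSpace ℝ E] [FiniteDimensional ℝ E] [MeasurableSpace E] [BorelSpace E]
    (α : E) {p : ℝ} (hp : 0 < p) {g : E → ℝ} (hg : Continuous g) :
    LocallyIntegrable fun x : E =>
      cosh (⟪α, x⟫ / 2) / sinh (⟪α, x⟫ / 2) * (|sinh (⟪α, x⟫ / 2)| ^ p * g x) := by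
  have hsinh : LocallyIntegrable fun x : E => |sinh (⟪α, x⟫ / 2)| ^ (p - 1) := by
    simpa [real_inner_smul_left, div_eq_inv_mul] using
      (locallyIntegrable_abs_sinh_rpow (by linarith)).comp_inner ((2 : ℝ)⁻¹ • α)
  have hdom : LocallyIntegrable fun x : E =>
      (|cosh (⟪α, x⟫ / 2)| * |g x|) * |sinh (⟪α, x⟫ / 2)| ^ (p - 1) :=
    locallyIntegrableOn_univ.1 <| (locallyIntegrableOn_univ.2 hsinh).continuousOn_mul
      (((continuous_cosh.comp ((continuous_const.inner continuous_id).div_const 2)).abs.mul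
        hg.abs).continuousOn) isClosed_univ.isLocallyClosed
  refine hdom.mono (Measurable.aestronglyMeasurable (by fun_prop)) (ae_of_all _ fun x => ?_)
  calc ‖cosh (⟪α, x⟫ / 2) / sinh (⟪α, x⟫ / 2) * (|sinh (⟪α, x⟫ / 2)| ^ p * g x)‖
      = |cosh (⟪α, x⟫ / 2) / sinh (⟪α, x⟫ / 2)| * |sinh (⟪α, x⟫ / 2)| ^ p * |g x| := by
        rw [← mul_assoc, norm_mul, norm_mul, Real.norm_eq_abs, Real.norm_of_nonneg (by positivity),
          Real.norm_eq_abs]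
    _ ≤ |cosh (⟪α, x⟫ / 2)| * |sinh (⟪α, x⟫ / 2)| ^ (p - 1) * |g x| :=
        mul_le_mul_of_nonneg_right (abs_div_mul_abs_rpow_le _ _ _) (abs_nonneg _)
    _ ≤ ‖|cosh (⟪α, x⟫ / 2)| * |g x| * |sinh (⟪α, x⟫ / 2)| ^ (p - 1)‖ := by
        rw [mul_right_comm]
        exact le_norm_self _

theorem stmt_19_general (n : ℕ)
    (Rplus : Finset (EuclideanSpace ℝ (Fin n)))
    (k : EuclideanSpace ℝ (Fin n) → ℝ) (hk : ∀ β ∈ Rplus, 0 < k β)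
    (δ : EuclideanSpace ℝ (Fin n) → ℝ)
    (hδ : ∀ x, δ x = ∏ β ∈ Rplus, |Real.sinh (⟪β, x⟫ / 2)| ^ (2 * k β))
    (α : EuclideanSpace ℝ (Fin n)) (hα : α ∈ Rplus) (A : ℝ) :
    IntegrableOn
      (fun x => (Real.cosh (⟪α, x⟫ / 2) / Real.sinh (⟪α, x⟫ / 2)) * δ x)
      {x | (∀ β ∈ Rplus, 0 ≤ ⟪β, x⟫) ∧ ‖x‖ ≤ A} volume := by
  have hrest : Continuous fun x : EuclideanSpace ℝ (Fin n) =>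
      ∏ β ∈ Rplus.erase α, |sinh (⟪β, x⟫ / 2)| ^ (2 * k β) :=
    continuous_finsetProd _ fun β hβ =>
      (continuous_sinh.comp ((continuous_const.inner continuous_id).div_const 2)).abs.rpow_const
        fun _ => Or.inr (by linarith [hk β (Finset.mem_of_mem_erase hβ)])
  have hF : LocallyIntegrable fun x : EuclideanSpace ℝ (Fin n) =>
      cosh (⟪α, x⟫ / 2) / sinh (⟪α, x⟫ / 2) * δ x := by
    simp_rw [hδ, ← Finset.mul_prod_erase Rplus _ hα]
    exact locallyIntegrable_coth_mul_abs_sinh_rpow_mul α (by linarith [hk α hα]) hrest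
  exact (hF.integrableOn_isCompact (isCompact_closedBall 0 A)).mono_set
    fun x hx => mem_closedBall_zero_iff.2 hx.2

theorem stmt_19 (n : ℕ)
    (Rplus : Finset (EuclideanSpace ℝ (Fin n)))
    (hR0 : ∀ β ∈ Rplus, β ≠ 0)
    (k : EuclideanSpace ℝ (Fin n) → ℝ) (hk : ∀ β ∈ Rplus, 0 < k β)
    (δ : EuclideanSpace ℝ (Fin n) → ℝ)
    (hδ : ∀ x, δ x = ∏ β ∈ Rplus, |Real.sinh (⟪β, x⟫ / 2)| ^ (2 * k β))
    (α : EuclideanSpace ℝ (Fin n)) (hα : α ∈ Rplus) (A : ℝ) (hA : 0 < A) :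
    IntegrableOn
      (fun x => (Real.cosh (⟪α, x⟫ / 2) / Real.sinh (⟪α, x⟫ / 2)) * δ x)
      {x | (∀ β ∈ Rplus, 0 ≤ ⟪β, x⟫) ∧ ‖x‖ ≤ A} volume :=
  stmt_19_general n Rplus k hk δ hδ α hα A
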